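/- Every hard-core configuration on the 2K×3L triangular grid Λ has at most 2KL particles; equivalently, every independent set of the graph Λ has cardinality at most 2KL. -/
import Mathlib


open Finset

variable (K L : ℕ) [NeZero K] [NeZero L]

/-- Vertices of the `2K × 3L` triangular grid: pairs `(i,j) ∈ (ℤ/2K) × (ℤ/6L)` with `i+j` even. -/
abbrev Vert (K L : ℕ) [NeZero K] [NeZero L] : Type :=
  {p : ZMod (2 * K) × ZMod (6 * L) // (p.1.val + p.2.val) % 2 = 0}

/-- Adjacency in the triangular grid with periodic boundary conditions. -/
abbrev Adj (v w : Vert K L) : Prop :=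
  (w.1.1 = v.1.1 ∧ (w.1.2 = v.1.2 + 2 ∨ w.1.2 = v.1.2 - 2)) ∨
  ((w.1.1 = v.1.1 + 1 ∨ w.1.1 = v.1.1 - 1) ∧ (w.1.2 = v.1.2 + 1 ∨ w.1.2 = v.1.2 - 1))

/-- A particle configuration on the grid. -/
abbrev Cfg (K L : ℕ) [NeZero K] [NeZero L] : Type := Vert K L → Bool

/-- Hard-core condition: no two adjacent occupied sites. -/
abbrev HardCore (σ : Cfg K L) : Prop :=
  ∀ v w : Vert K L, Adj K L v w → ¬(σ v = true ∧ σ w = true)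

/-- Number of particles of a configuration. -/
def nParticles (σ : Cfg K L) : ℕ := (univ.filter fun v => σ v = true).card

/-- The energy (Hamiltonian) `H(σ) = -Σ_v σ(v)`. -/
def energy (σ : Cfg K L) : ℤ := -(nParticles K L σ : ℤ)

/-- The configuration `a`: indicator of `Λ_a` (columns `j ≡ 0 (mod 3)`). -/
def confA : Cfg K L := fun v => decide (v.1.2.val % 3 = 0)

/-- The configuration `b`: indicator of `Λ_b` (columns `j ≡ 1 (mod 3)`). -/
def confB : Cfg K L := fun v => decide (v.1.2.val % 3 = 1)

/-- The configuration `c`: indicator of `Λ_c` (columns `j ≡ 2 (mod 3)`). -/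
def confC : Cfg K L := fun v => decide (v.1.2.val % 3 = 2)

/-- A path in the energy landscape: a finite sequence of hard-core configurations,
consecutive ones differing in at most one vertex. -/
structure HCPath (σ σ' : Cfg K L) where
  n : ℕ
  ω : Fin (n + 1) → Cfg K L
  first : ω 0 = σ
  last : ω (Fin.last n) = σ'
  hc : ∀ i, HardCore K L (ω i)
  step : ∀ i : Fin n,
    ((univ : Finset (Vert K L)).filter fun v => ω i.castSucc v ≠ ω i.succ v).card ≤ 1

/-- Height of a path: maximal energy along it. -/
noncomputable def pathHeight {σ σ' : Cfg K L} (p : HCPath K L σ σ') : ℤ :=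
  Finset.univ.sup' Finset.univ_nonempty fun i => energy K L (p.ω i)

/-- Communication height `Φ(σ,σ')`: minimal height over all paths from `σ` to `σ'`. -/
noncomputable def commHeight (σ σ' : Cfg K L) : ℤ :=
  sInf {h : ℤ | ∃ p : HCPath K L σ σ', pathHeight K L p = h}

/-- The horizontal stripe `S_i = r_{2i} ∪ r_{2i+1}`. -/
abbrev inHStripe (i : ℕ) (v : Vert K L) : Prop :=
  v.1.1 = ((2 * i : ℕ) : ZMod (2 * K)) ∨ v.1.1 = ((2 * i + 1 : ℕ) : ZMod (2 * K))

/-- The vertical stripe `C_j = c_j ∪ c_{j+1} ∪ c_{j+2}` (column indices mod `6L`). -/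
abbrev inVStripe (j : ℕ) (v : Vert K L) : Prop :=
  v.1.2 = ((j : ℕ) : ZMod (6 * L)) ∨ v.1.2 = ((j + 1 : ℕ) : ZMod (6 * L)) ∨
    v.1.2 = ((j + 2 : ℕ) : ZMod (6 * L))

/-- Two configurations agree on a region. -/
def agreesOn (P : Vert K L → Prop) (σ τ : Cfg K L) : Prop := ∀ v, P v → σ v = τ v

/-- Every hard-core configuration on the `2K × 3L` triangular grid
has at most `2KL` particles. -/
lemma triangle_adj (v w : Vert K L)
    (hne : v ≠ w)
    (hi : v.1.1.val / 2 = w.1.1.val / 2)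
    (hj : v.1.2.val / 6 = w.1.2.val / 6)
    (hup : (v.1.2.val % 6 ≤ 2) ↔ (w.1.2.val % 6 ≤ 2)) :
    Adj K L v w := by
  have hvpar := v.2
  have hwpar := w.2
  have hiv : v.1.1.val < 2 * K := ZMod.val_lt _
  have hiw : w.1.1.val < 2 * K := ZMod.val_lt _
  have hjv : v.1.2.val < 6 * L := ZMod.val_lt _
  have hjw : w.1.2.val < 6 * L := ZMod.val_lt _
  have hcast1 : ((v.1.1.val : ℕ) : ZMod (2 * K)) = v.1.1 := by
    simp [ZMod.natCast_val, ZMod.cast_id]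
  have hcast1' : ((w.1.1.val : ℕ) : ZMod (2 * K)) = w.1.1 := by
    simp [ZMod.natCast_val, ZMod.cast_id]
  have hcast2 : ((v.1.2.val : ℕ) : ZMod (6 * L)) = v.1.2 := by
    simp [ZMod.natCast_val, ZMod.cast_id]
  have hcast2' : ((w.1.2.val : ℕ) : ZMod (6 * L)) = w.1.2 := by
    simp [ZMod.natCast_val, ZMod.cast_id]
  have hne' : v.1.1.val ≠ w.1.1.val ∨ v.1.2.val ≠ w.1.2.val := by
    by_contra h
    push_neg at h
    apply hne
    apply Subtype.ext
    apply Prod.ext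
    · exact ZMod.val_injective _ h.1
    · exact ZMod.val_injective _ h.2
  set i1 := v.1.1.val with hI1
  set i2 := w.1.1.val with hI2
  set j1 := v.1.2.val with hJ1
  set j2 := w.1.2.val with hJ2
  have key : (i2 = i1 ∧ (j2 = j1 + 2 ∨ j2 + 2 = j1)) ∨
      ((i2 = i1 + 1 ∨ i2 + 1 = i1) ∧ (j2 = j1 + 1 ∨ j2 + 1 = j1)) := by
    omega
  rcases key with ⟨h1, h2⟩ | ⟨h1, h2⟩
  · left
    constructor
    · rw [← hcast1, ← hcast1', h1]
    · rcases h2 with h2 | h2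
      · left; rw [← hcast2, ← hcast2', h2]; push_cast; ring
      · right; rw [← hcast2, ← hcast2', ← h2]; push_cast; ring
  · right
    constructor
    · rcases h1 with h1 | h1
      · left; rw [← hcast1, ← hcast1', h1]; push_cast; ring
      · right; rw [← hcast1, ← hcast1', ← h1]; push_cast; ring
    · rcases h2 with h2 | h2
      · left; rw [← hcast2, ← hcast2', h2]; push_cast; ring
      · right; rw [← hcast2, ← hcast2', ← h2]; push_cast; ring

theorem max_occupancy (hK : 2 ≤ K) (hL : 1 ≤ L) (σ : Cfg K L) (hσ : HardCore K L σ) :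
    nParticles K L σ ≤ 2 * K * L := by
  classical
  have hK0 : 0 < K := NeZero.pos K
  have hL0 : 0 < L := NeZero.pos L
  set g : Vert K L → Fin K × Fin L × Bool := fun v =>
    (⟨v.1.1.val / 2, by
        have : v.1.1.val < 2 * K := ZMod.val_lt _
        omega⟩,
     ⟨v.1.2.val / 6, by
        have : v.1.2.val < 6 * L := ZMod.val_lt _
        omega⟩,
     decide (v.1.2.val % 6 ≤ 2)) with hg
  have hinj : Set.InjOn g ↑(univ.filter fun v => σ v = true) := by
    intro v hv w hw hgvw
    by_contra hne
    have hadj : Adj K L v w := by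
      apply triangle_adj
      · exact hne
      · exact congrArg (fun x => (x.1 : ℕ)) hgvw
      · exact congrArg (fun x => (x.2.1 : ℕ)) hgvw
      · have := congrArg (fun x => x.2.2) hgvw
        simp only [hg, decide_eq_decide] at this ⊢
        exact this
    simp only [coe_filter, Set.mem_setOf_eq, mem_univ, true_and] at hv hw
    exact hσ v w hadj ⟨hv, hw⟩
  have hcard : nParticles K L σ ≤ (univ : Finset (Fin K × Fin L × Bool)).card :=
    Finset.card_le_card_of_injOn g (fun a _ => mem_univ _) hinj
  simpa [Fintype.card_prod, mul_comm, mul_assoc, mul_left_comm, nParticles] using hcard
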